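/- arXiv:2104.04614 — 3 statements merged into one kernel-verified Lean document; each statement's English description precedes it below -/
import Mathlib

section
/- Consider two triangles with a common edge of length ℓ_{ij}, forming an inscribed quadrilateral, with side lengths ℓ_{jk}, ℓ_{ki}, ℓ_{im}, ℓ_{mj} and second diagonal ℓ_{km} = (ℓ_{jk}ℓ_{im} + ℓ_{ki}ℓ_{mj})/ℓ_{ij} given by Ptolemy. If the original lengths satisfy the Delaunay-critical (co-circular) equality (ℓ²_{jk}+ℓ²_{ki}−ℓ²_{ij})/(ℓ_{jk}ℓ_{ki}) + (ℓ²_{jm}+ℓ²_{mi}−ℓ²_{ij})/(ℓ_{jm}ℓ_{mi}) = 0, then the new configuration after the flip also satisfies the corresponding equality with roles of diagonals exchanged: (ℓ²_{ki}+ℓ²_{im}−ℓ²_{km})/(ℓ_{ki}ℓ_{im}) + (ℓ²_{mj}+ℓ²_{jk}−ℓ²_{km})/(ℓ_{mj}ℓ_{jk}) = 0. -/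
/-- If two triangles sharing edge `e_ij` are Delaunay-critical (the four
vertices are co-circular, i.e. the length-based Delaunay expression vanishes),
then after flipping `e_ij` to the Ptolemy diagonal `ℓ_km`, the flipped
configuration is again Delaunay-critical with respect to `e_km`. -/
theorem ptolemy_flip_preserves_cocircularity
    (ℓij ℓjk ℓki ℓim ℓmj ℓkm : ℝ)
    (hij : 0 < ℓij) (hjk : 0 < ℓjk) (hki : 0 < ℓki) (him : 0 < ℓim) (hmj : 0 < ℓmj)
    (hkm : ℓkm = (ℓjk * ℓim + ℓki * ℓmj) / ℓij)
    (hcrit : (ℓjk ^ 2 + ℓki ^ 2 - ℓij ^ 2) / (ℓjk * ℓki)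
        + (ℓmj ^ 2 + ℓim ^ 2 - ℓij ^ 2) / (ℓmj * ℓim) = 0) :
    (ℓki ^ 2 + ℓim ^ 2 - ℓkm ^ 2) / (ℓki * ℓim)
      + (ℓmj ^ 2 + ℓjk ^ 2 - ℓkm ^ 2) / (ℓmj * ℓjk) = 0 := by
  have h0 : (ℓjk ^ 2 + ℓki ^ 2 - ℓij ^ 2) * (ℓmj * ℓim)
      + (ℓmj ^ 2 + ℓim ^ 2 - ℓij ^ 2) * (ℓjk * ℓki) = 0 := by
    field_simp at hcrit
    linarith
  subst hkm
  rw [div_add_div _ _ (by positivity) (by positivity), div_eq_zero_iff]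
  left
  field_simp
  ring_nf
  nlinarith [h0, sq_nonneg ℓij, mul_pos hjk him, mul_pos hki hmj,
    mul_pos (mul_pos hjk him) (mul_pos hki hmj)]
end

section
/- On the symmetric double cover with a symmetric metric and symmetric target angles, the gradient of the discrete conformal energy is R-equivariant: if the scale factors satisfy u_{R(i)} = u_i for all vertices i, then the angle defect gradient satisfies g_{R(i)}(u) = g_i(u) for all i. Consequently, the Newton iteration preserves the symmetric subspace {u : u∘R = u} (in exact arithmetic). -/
open Real Finset

/-- The conformally scaled edge length `ℓ_{ab} e^{(u_a+u_b)/2}`. -/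
noncomputable def scaledLen {V : Type*} (ℓ : V → V → ℝ) (u : V → ℝ) (a b : V) : ℝ :=
  ℓ a b * Real.exp ((u a + u b) / 2)

/-- The interior angle at vertex `a` of the triangle `(a, b, c)`, computed by
the law of cosines from the conformally scaled lengths. -/
noncomputable def cornerAngle {V : Type*} (ℓ : V → V → ℝ) (u : V → ℝ) (a b c : V) : ℝ :=
  Real.arccos ((scaledLen ℓ u a b ^ 2 + scaledLen ℓ u c a ^ 2 - scaledLen ℓ u b c ^ 2) /
    (2 * scaledLen ℓ u a b * scaledLen ℓ u c a))

/-- The total angle `Θ_i(u)` at a vertex `i`: the sum over all triangles of the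
triangulation `F` of the interior angle at `i` (zero contribution from
non-incident corners). -/
noncomputable def totalAngle {V : Type*} [DecidableEq V] (F : Finset (V × V × V))
    (ℓ : V → V → ℝ) (u : V → ℝ) (i : V) : ℝ :=
  ∑ t ∈ F,
    ((if t.1 = i then cornerAngle ℓ u t.1 t.2.1 t.2.2 else 0)
      + (if t.2.1 = i then cornerAngle ℓ u t.2.1 t.2.2 t.1 else 0)
      + (if t.2.2 = i then cornerAngle ℓ u t.2.2 t.1 t.2.1 else 0))

/-- On the symmetric double cover (triangulation, metric and target angles all
invariant under the vertex involution `R`), the gradient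
`g_i(u) = Θ̂_i − Θ_i(u)` of the discrete conformal energy is `R`-equivariant on
the symmetric subspace: if `u ∘ R = u` then `g_{R(i)}(u) = g_i(u)` for all
vertices `i`.  Consequently the Newton iteration preserves the symmetric
subspace (in exact arithmetic). -/
theorem symmetric_gradient_equivariant
    {V : Type*} [DecidableEq V]
    (R : V → V) (hR2 : ∀ i, R (R i) = i)
    (F : Finset (V × V × V))
    (hFsym : F.image (fun t => (R t.1, R t.2.1, R t.2.2)) = F)
    (ℓ : V → V → ℝ) (hℓpos : ∀ a b, 0 < ℓ a b) (hℓsym : ∀ a b, ℓ a b = ℓ b a)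
    (hℓR : ∀ a b, ℓ (R a) (R b) = ℓ a b)
    (Θhat : V → ℝ) (hΘhatR : ∀ i, Θhat (R i) = Θhat i)
    (g : V → (V → ℝ) → ℝ)
    (hg : ∀ i u, g i u = Θhat i - totalAngle F ℓ u i)
    (u : V → ℝ) (husym : ∀ i, u (R i) = u i) :
    ∀ i, g (R i) u = g i u := by
  intro i
  have hRinj : Function.Injective R := Function.LeftInverse.injective hR2
  have hsc : ∀ a b, scaledLen ℓ u (R a) (R b) = scaledLen ℓ u a b := by
    intro a b
    simp [scaledLen, hℓR, husym]
  have hca : ∀ a b c, cornerAngle ℓ u (R a) (R b) (R c) = cornerAngle ℓ u a b c := by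
    intro a b c
    simp [cornerAngle, hsc]
  have hTA : totalAngle F ℓ u (R i) = totalAngle F ℓ u i := by
    unfold totalAngle
    conv_lhs => rw [← hFsym]
    have hσ : ∀ a ∈ F, ∀ b ∈ F, (fun t : V × V × V => (R t.1, R t.2.1, R t.2.2)) a = (fun t : V × V × V => (R t.1, R t.2.1, R t.2.2)) b → a = b := by
      intro a _ b _ h
      simp only [Prod.mk.injEq] at h
      exact Prod.ext (hRinj h.1) (Prod.ext (hRinj h.2.1) (hRinj h.2.2))
    rw [Finset.sum_image hσ]
    refine Finset.sum_congr rfl fun t _ => ?_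
    have hiff : ∀ a : V, (R a = R i) ↔ (a = i) := fun a => ⟨fun h => hRinj h, fun h => h ▸ rfl⟩
    simp only [hiff, hca]
  rw [hg, hg, hΘhatR, hTA]
end

section
/- For a triangulated surface with boundary, the discrete Gauss–Bonnet theorem holds: ∑_{interior vertices} (2π − Θ_i) + ∑_{boundary vertices} (π − Θ_i) = 2π·χ, where χ is the Euler characteristic of the surface. -/
open Real Finset

/-- Discrete Gauss–Bonnet for a compact triangulated surface with boundary:
`∑_{interior} (2π − Θ_i) + ∑_{boundary} (π − Θ_i) = 2π (|V| − |E| + |F|)`.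
Encoding: each face has three sides and per-vertex interior angles summing to
`π`; each interior edge lies in exactly two faces and each boundary edge in
exactly one; the boundary consists of circles, so there are as many boundary
edges as boundary vertices. -/
theorem discrete_gauss_bonnet_boundary
    (V E F : Type*) [Fintype V] [Fintype E] [Fintype F]
    [DecidableEq V] [DecidableEq E]
    (Vbnd : Finset V) (Ebnd : Finset E)
    (angle : F → V → ℝ)
    (hangleSum : ∀ f : F, ∑ v : V, angle f v = π)
    (sides : F → Finset E)
    (hsides : ∀ f : F, (sides f).card = 3)
    (hint : ∀ e : E, e ∉ Ebnd →
      (Finset.univ.filter (fun f : F => e ∈ sides f)).card = 2)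
    (hbnd : ∀ e : E, e ∈ Ebnd →
      (Finset.univ.filter (fun f : F => e ∈ sides f)).card = 1)
    (hcircles : Ebnd.card = Vbnd.card)
    (Θ : V → ℝ) (hΘ : ∀ i : V, Θ i = ∑ f : F, angle f i) :
    ∑ i ∈ Finset.univ \ Vbnd, (2 * π - Θ i) + ∑ i ∈ Vbnd, (π - Θ i)
      = 2 * π * ((Fintype.card V : ℝ) - (Fintype.card E : ℝ) + (Fintype.card F : ℝ)) := by
  classical
  -- total angle sum
  have hΘsum : ∑ i : V, Θ i = π * (Fintype.card F : ℝ) := by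
    simp only [hΘ]
    rw [Finset.sum_comm]
    simp [hangleSum, mul_comm]
  -- double counting edges
  have hcount : 3 * Fintype.card F + Ebnd.card = 2 * Fintype.card E := by
    have h1 : ∑ f : F, (sides f).card
        = ∑ e : E, (Finset.univ.filter (fun f : F => e ∈ sides f)).card := by
      have hf : ∀ f : F, (sides f).card = ∑ e : E, if e ∈ sides f then 1 else 0 := by
        intro f
        rw [Finset.sum_ite_mem, Finset.univ_inter, Finset.sum_const, smul_eq_mul, mul_one]
      simp only [hf, Finset.card_filter]
      exact Finset.sum_comm
    have h2 : ∑ f : F, (sides f).card = 3 * Fintype.card F := by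
      simp [hsides, mul_comm]
    have h3 : ∑ e : E, (Finset.univ.filter (fun f : F => e ∈ sides f)).card
        = ∑ e ∈ Ebnd, 1 + ∑ e ∈ Finset.univ \ Ebnd, 2 := by
      rw [← Finset.sum_sdiff (Finset.subset_univ Ebnd)]
      rw [Finset.sum_congr rfl (fun e he => hint e (Finset.mem_sdiff.mp he).2),
        Finset.sum_congr rfl (fun e he => hbnd e he)]
      ring
    have hcardE : (Finset.univ \ Ebnd).card = Fintype.card E - Ebnd.card := by
      rw [Finset.card_sdiff_of_subset (Finset.subset_univ Ebnd), Finset.card_univ]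
    have hle : Ebnd.card ≤ Fintype.card E := by
      simpa using Finset.card_le_card (Finset.subset_univ Ebnd)
    rw [h2] at h1
    rw [h3, Finset.sum_const, Finset.sum_const, hcardE, smul_eq_mul, smul_eq_mul] at h1
    omega
  -- cast to ℝ
  have hcountR : 3 * (Fintype.card F : ℝ) + (Vbnd.card : ℝ) = 2 * (Fintype.card E : ℝ) := by
    rw [← hcircles]
    exact_mod_cast hcount
  -- split vertex sums
  have hsplit : ∑ i ∈ Finset.univ \ Vbnd, (2 * π - Θ i) + ∑ i ∈ Vbnd, (π - Θ i)
      = 2 * π * (Fintype.card V : ℝ) - π * (Vbnd.card : ℝ) - ∑ i : V, Θ i := by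
    rw [← Finset.sum_sdiff (Finset.subset_univ Vbnd) (f := Θ)]
    simp only [Finset.sum_sub_distrib, Finset.sum_const, nsmul_eq_mul, Finset.card_sdiff_of_subset
      (Finset.subset_univ Vbnd), Finset.card_univ]
    have hle : (Vbnd.card : ℝ) ≤ (Fintype.card V : ℝ) := by
      exact_mod_cast Finset.card_le_card (Finset.subset_univ Vbnd)
    have : ((Fintype.card V - Vbnd.card : ℕ) : ℝ) = (Fintype.card V : ℝ) - Vbnd.card := by
      have := Finset.card_le_card (Finset.subset_univ Vbnd)
      rw [Finset.card_univ] at this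
      push_cast [this]; ring
    rw [this]; ring
  rw [hsplit, hΘsum]
  nlinarith [Real.pi_pos, hcountR]
end
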